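/- arXiv:1801.02885 — 9 statements merged into one kernel-verified Lean document; each statement's English description precedes it below -/
import Mathlib

section
/- Let K be a field of characteristic 0, let D ∈ K[X] be a squarefree polynomial, let α ∈ K be a root of D, and let F ∈ K[X] be a polynomial divisible by (X−α)². Then the equation A² − D·B² = F has a non-trivial solution A, B ∈ K[X] if and only if the equation A'² − D·B'² = F/(X−α)² has a non-trivial solution A', B' ∈ K[X]. -/
open Polynomial

/-- Let `K` be a field of characteristic 0, `D ∈ K[X]` squarefree,
`α ∈ K` a root of `D`, and `F ∈ K[X]` divisible by `(X − α)²`. Then the almost-Pell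
equation `A² − D·B² = F` has a non-trivial solution in `K[X]` if and only if
`A'² − D·B'² = F/(X−α)²` has a non-trivial solution in `K[X]`. -/
theorem almostPell_solvable_iff_quotient_solvable
    {K : Type*} [Field K] [CharZero K]
    (D F : Polynomial K) (α : K)
    (hD : Squarefree D) (hα : D.IsRoot α)
    (hF : (X - C α) ^ 2 ∣ F) :
    (∃ A B : Polynomial K, B ≠ 0 ∧ A ^ 2 - D * B ^ 2 = F) ↔
    (∃ A' B' : Polynomial K, B' ≠ 0 ∧ A' ^ 2 - D * B' ^ 2 = F / (X - C α) ^ 2) := by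
  set π : Polynomial K := X - C α with hπdef
  have hπ_ne : π ≠ 0 := X_sub_C_ne_zero α
  have hπ2_ne : π ^ 2 ≠ 0 := pow_ne_zero _ hπ_ne
  have hπ_prime : Prime π := (irreducible_X_sub_C α).prime
  have hcancel : π ^ 2 * (F / π ^ 2) = F :=
    EuclideanDomain.mul_div_cancel' hπ2_ne hF
  constructor
  · rintro ⟨A, B, hB, hEq⟩
    have hFα : F.eval α = 0 := by
      obtain ⟨G, hG⟩ := hF
      simp [hG, hπdef]
    have hAα : A.IsRoot α := by
      have h0 : (A ^ 2 - D * B ^ 2).eval α = 0 := by rw [hEq]; exact hFα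
      simp only [eval_sub, eval_mul, eval_pow, hα.eq_zero, zero_mul, sub_zero] at h0
      exact pow_eq_zero_iff (two_ne_zero) |>.mp h0
    obtain ⟨A1, hA1⟩ := dvd_iff_isRoot.mpr hAα
    obtain ⟨E, hE⟩ := dvd_iff_isRoot.mpr hα
    have hEα : ¬ π ∣ E := by
      intro h
      obtain ⟨E1, hE1⟩ := h
      exact hπ_prime.not_unit (hD π ⟨E1, by rw [hE, hE1]; ring⟩)
    have hπB : π ∣ B := by
      have h1 : π * π ∣ π * (E * B ^ 2) := by
        have heq2 : π * (E * B ^ 2) = π ^ 2 * A1 ^ 2 - F := by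
          rw [← hEq, hA1, hE]; ring
        rw [heq2]
        exact dvd_sub ⟨A1 ^ 2, by ring⟩ (by rwa [← sq])
      have h2 : π ∣ E * B ^ 2 := (mul_dvd_mul_iff_left hπ_ne).mp h1
      have h3 : π ∣ B ^ 2 := (hπ_prime.dvd_mul.mp h2).resolve_left hEα
      exact hπ_prime.dvd_of_dvd_pow h3
    obtain ⟨B1, hB1⟩ := hπB
    refine ⟨A1, B1, ?_, ?_⟩
    · intro h; apply hB; rw [hB1, h, mul_zero]
    · have key : π ^ 2 * (A1 ^ 2 - D * B1 ^ 2) = π ^ 2 * (F / π ^ 2) := by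
        rw [hcancel, ← hEq, hA1, hB1]; ring
      exact mul_left_cancel₀ hπ2_ne key
  · rintro ⟨A', B', hB', hEq⟩
    refine ⟨π * A', π * B', mul_ne_zero hπ_ne hB', ?_⟩
    have h : (π * A') ^ 2 - D * (π * B') ^ 2 = π ^ 2 * (A' ^ 2 - D * B' ^ 2) := by ring
    rw [h, hEq, hcancel]
end

section
/- The Galois group of the polynomial X⁷ − X³ − 1 over ℚ is the full symmetric group on its 7 roots; that is, the action of the Galois group of the splitting field of X⁷ − X³ − 1 over ℚ on the set of its roots induces an isomorphism of this Galois group with the symmetric group S₇ (equivalently, every permutation of the 7 roots is realized by a field automorphism of the splitting field fixing ℚ). -/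
open Polynomial

instance factSplitsSplittingField (p : Polynomial ℚ) :
    Fact ((p.map (algebraMap ℚ p.SplittingField)).Splits) :=
  ⟨SplittingField.splits p⟩

/-!
Modulo 2 the polynomial `X⁷ - X³ - 1` has no root in any field with 2, 4 or 8 elements, so it is
irreducible over `𝔽₂` and hence over `ℚ`; in particular its Galois group has an element of order 7.
Modulo 2557 (the least prime for which this happens) it is a product of five distinct linear
factors and an irreducible quadratic. Hensel's lemma lifts this to a factorization over `ℚ₂₅₅₇`
with five roots and an irreducible quadratic factor, and a `ℚ₂₅₅₇`-automorphism of the splitting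
field of that quadratic exchanges its two roots and fixes the other five: its restriction is a
transposition. A transitive subgroup of `S₇` containing a transposition is all of `S₇`.
-/

universe u

theorem Polynomial.Monic.irreducible_of_forall_aeval_ne_zero {K : Type u} [Field K] {f : K[X]}
    (hf : f.Monic) (hf1 : f ≠ 1)
    (h : ∀ (L : Type u) [Field L] [Algebra K L] [FiniteDimensional K L],
      Module.finrank K L ≤ f.natDegree / 2 → ∀ x : L, aeval x f ≠ 0) :
    Irreducible f := by
  refine hf.irreducible_iff_natDegree'.mpr ⟨hf1, fun a g _ hg hag hdeg => ?_⟩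
  obtain ⟨hpos, hle⟩ := Finset.mem_Ioc.mp hdeg
  obtain ⟨r, hr, hrg⟩ := WfDvdMonoid.exists_irreducible_factor
    (not_isUnit_of_natDegree_pos g hpos) hg.ne_zero
  have := Fact.mk hr
  let pb := AdjoinRoot.powerBasis hr.ne_zero
  have := pb.finite
  refine h (AdjoinRoot r) ?_ (AdjoinRoot.root r) ?_
  · rw [pb.finrank, AdjoinRoot.powerBasis_dim]
    exact (natDegree_le_of_dvd hrg hg.ne_zero).trans hle
  · rw [AdjoinRoot.aeval_eq, AdjoinRoot.mk_eq_zero]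
    exact hrg.trans (Dvd.intro_left a hag)

theorem irreducible_X_sq_add_C_mul_X_add_C {k : Type*} [Field k] {b c : k}
    (h : ∀ s : k, discrim 1 b c ≠ s ^ 2) : Irreducible (X ^ 2 + C b * X + C c) := by
  have hmonic : (X ^ 2 + C b * X + C c).Monic := by monicity!
  have hdeg : (X ^ 2 + C b * X + C c).natDegree = 2 := by compute_degree!
  rw [hmonic.irreducible_iff_roots_eq_zero_of_degree_le_three (by omega) (by omega)]
  refine Multiset.eq_zero_of_forall_notMem fun x hx => ?_
  rw [mem_roots hmonic.ne_zero, IsRoot, eval_add, eval_add, eval_mul, eval_pow, eval_X, eval_C,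
    eval_C] at hx
  exact quadratic_ne_zero_of_discrim_ne_sq h x (by linear_combination hx)

theorem HenselianLocalRing.exists_eq_prod_X_sub_C_mul {R k : Type u} [CommRing R] [IsDomain R]
    [HenselianLocalRing R] [Field k] {φ : R →+* k} (hφ : Function.Surjective φ) {f : R[X]}
    (hf : f.Monic) {s : Finset k} {g : k[X]} (hfac : f.map φ = (∏ c ∈ s, (X - C c)) * g)
    (hsimple : ∀ c ∈ s, (derivative (f.map φ)).eval c ≠ 0) :
    ∃ (S : Multiset R) (q : R[X]), q.Monic ∧ q.map φ = g ∧ f = (S.map (X - C ·)).prod * q := by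
  have hlift : ∀ c ∈ s, ∃ a, f.IsRoot a ∧ φ a = c := by
    intro c hc
    have hroot : (f.map φ).eval c = 0 := by
      rw [hfac, eval_mul, eval_prod, Finset.prod_eq_zero hc (by simp), zero_mul]
    have hensel := (HenselianLocalRing.TFAE R).out 0 2
    refine hensel.mp ‹_› φ hφ f hf c ?_ ?_
    · rwa [eval_map] at hroot
    · simpa [eval_map, derivative_map] using hsimple c hc
  choose! lift hlift_root hlift_spec using hlift
  set S := s.val.map lift
  have hS : S.map φ = s.val := by
    rw [Multiset.map_map]
    conv_rhs => rw [← Multiset.map_id s.val]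
    exact Multiset.map_congr rfl fun c hc => hlift_spec c hc
  have hdvd : (S.map (X - C ·)).prod ∣ f := by
    have hS_nodup : S.Nodup := Multiset.Nodup.of_map φ (hS ▸ s.nodup)
    rw [Multiset.prod_X_sub_C_dvd_iff_le_roots hf.ne_zero, Multiset.le_iff_subset hS_nodup]
    intro a ha
    obtain ⟨c, hc, rfl⟩ := Multiset.mem_map.mp ha
    exact (mem_roots hf.ne_zero).mpr (hlift_root c hc)
  obtain ⟨q, hq⟩ := hdvd
  have hP : (S.map (X - C ·)).prod.Monic :=
    monic_multiset_prod_of_monic _ _ fun a _ => monic_X_sub_C a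
  refine ⟨S, q, hP.of_mul_monic_left (hq ▸ hf), ?_, hq⟩
  have hPmap : (S.map (X - C ·)).prod.map φ = ∏ c ∈ s, (X - C c) := by
    calc (S.map (X - C ·)).prod.map φ = ((S.map φ).map (X - C ·)).prod := by
          simp [Polynomial.map_multiset_prod, Multiset.map_map]
      _ = ∏ c ∈ s, (X - C c) := by rw [hS]; rfl
  refine mul_left_cancel₀ (hP.map φ).ne_zero ?_
  rw [← Polynomial.map_mul, ← hq, hfac, hPmap]

instance PadicInt.henselianLocalRing (p : ℕ) [Fact p.Prime] : HenselianLocalRing ℤ_[p] where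
  is_henselian f hf a₀ h₁ h₂ := HenselianRing.is_henselian f hf a₀ h₁ (h₂.map _)

theorem Polynomial.exists_algEquiv_swap_of_natDegree_eq_two {E : Type*} [Field E] {q : E[X]}
    (hq : Irreducible q) (hq2 : q.natDegree = 2) (hsep : q.Separable) :
    ∃ (τ : Gal(q.SplittingField/E)) (b₁ b₂ : q.SplittingField), b₁ ≠ b₂ ∧
      (∀ y, aeval y q = 0 ↔ y = b₁ ∨ y = b₂) ∧ τ b₁ = b₂ ∧ τ b₂ = b₁ := by
  have hcard : Multiset.card (q.aroots q.SplittingField) = 2 := by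
    rw [← (SplittingField.splits q).natDegree_eq_card_roots, natDegree_map, hq2]
  obtain ⟨b₁, b₂, hb⟩ := Multiset.card_eq_two.mp hcard
  have hb₁₂ : b₁ ≠ b₂ := by
    have : (q.aroots q.SplittingField).Nodup := nodup_roots hsep.map
    rw [hb] at this
    simpa using this
  have hroot : ∀ y, aeval y q = 0 ↔ y = b₁ ∨ y = b₂ := by
    intro y
    calc aeval y q = 0 ↔ y ∈ q.aroots q.SplittingField := by
          rw [mem_aroots, and_iff_right hq.ne_zero]
      _ ↔ y = b₁ ∨ y = b₂ := by simp [hb]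
  have hminpoly : ∀ y : q.SplittingField, aeval y q = 0 → minpoly E y = q * C q.leadingCoeff⁻¹ :=
    fun y hy => (minpoly.eq_of_irreducible hq hy).symm
  obtain ⟨τ, hτ₂⟩ := (Normal.minpoly_eq_iff_mem_orbit q.SplittingField).mp
    ((hminpoly b₁ ((hroot b₁).mpr (.inl rfl))).trans (hminpoly b₂ ((hroot b₂).mpr (.inr rfl))).symm)
  have hτ₁ : aeval (τ b₁) q = 0 := by
    rw [aeval_algEquiv, AlgHom.comp_apply, (hroot b₁).mpr (.inl rfl), map_zero]
  refine ⟨τ, b₁, b₂, hb₁₂, hroot, ?_, hτ₂⟩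
  rcases (hroot _).mp hτ₁ with h | h
  · exact absurd (τ.injective (h.trans hτ₂.symm)) hb₁₂
  · exact h

namespace Polynomial.Gal

variable {F : Type*} [Field F] {p : F[X]}

theorem galActionHom_eq_permCongr (E E' : Type*) [Field E] [Algebra F E] [Field E'] [Algebra F E']
    [Fact ((p.map (algebraMap F E)).Splits)] [Fact ((p.map (algebraMap F E')).Splits)]
    (σ : p.Gal) :
    galActionHom p E' σ =
      ((rootsEquivRoots p E).symm.trans (rootsEquivRoots p E')).permCongr (galActionHom p E σ) := by
  ext x
  simp [galActionHom, smul_def, Equiv.permCongr_apply]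

open scoped Classical in
theorem isSwap_galActionHom_of_isSwap {E E' : Type*} [Field E] [Algebra F E] [Field E']
    [Algebra F E'] [Fact ((p.map (algebraMap F E)).Splits)]
    [Fact ((p.map (algebraMap F E')).Splits)] {σ : p.Gal} (hσ : (galActionHom p E σ).IsSwap) :
    (galActionHom p E' σ).IsSwap := by
  obtain ⟨a, b, hab, hσ⟩ := hσ
  set e := (rootsEquivRoots p E).symm.trans (rootsEquivRoots p E')
  refine ⟨e a, e b, e.injective.ne hab, ?_⟩
  rw [galActionHom_eq_permCongr E E', hσ, Equiv.permCongr_def, Equiv.symm_trans_swap_trans]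

open scoped Classical in
theorem exists_isSwap_galActionHom_of_map_eq_prod_mul {E : Type*} [Field E] [Algebra F E]
    {S : Multiset E} {q : E[X]} (hq : Irreducible q) (hq2 : q.natDegree = 2) (hsep : q.Separable)
    (hfac : p.map (algebraMap F E) = (S.map (X - C ·)).prod * q) (E' : Type*) [Field E']
    [Algebra F E'] [Fact ((p.map (algebraMap F E')).Splits)] :
    ∃ σ : p.Gal, (galActionHom p E' σ).IsSwap := by
  set K := q.SplittingField
  have hp : p ≠ 0 := by
    rintro rfl
    rw [Polynomial.map_zero, eq_comm, mul_eq_zero] at hfac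
    exact hfac.elim (monic_multiset_prod_of_monic _ _ fun a _ => monic_X_sub_C a).ne_zero
      hq.ne_zero
  have hroot : ∀ y : K, aeval y p = 0 ↔ (∃ a ∈ S, y = algebraMap E K a) ∨ aeval y q = 0 := by
    intro y
    rw [← aeval_map_algebraMap E, hfac, map_mul, mul_eq_zero, map_multiset_prod,
      Multiset.prod_eq_zero_iff, Multiset.map_map]
    simp [sub_eq_zero]
  have hsplit : (p.map (algebraMap F K)).Splits := by
    rw [IsScalarTower.algebraMap_eq F E K, ← Polynomial.map_map, hfac, Polynomial.map_mul,
      Polynomial.map_multiset_prod, Multiset.map_map]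
    refine (Splits.multisetProd fun f hf => ?_).mul (SplittingField.splits q)
    obtain ⟨a, -, rfl⟩ := Multiset.mem_map.mp hf
    simp [Splits.X_sub_C]
  have := Fact.mk hsplit
  obtain ⟨τ, b₁, b₂, hb, hqroot, hτ₁, hτ₂⟩ := exists_algEquiv_swap_of_natDegree_eq_two hq hq2 hsep
  have hmem : ∀ b : K, aeval b q = 0 → b ∈ p.rootSet K :=
    fun b hb => mem_rootSet.mpr ⟨hp, (hroot b).mpr (.inr hb)⟩
  let x₁ : p.rootSet K := ⟨b₁, hmem b₁ ((hqroot b₁).mpr (.inl rfl))⟩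
  let x₂ : p.rootSet K := ⟨b₂, hmem b₂ ((hqroot b₂).mpr (.inr rfl))⟩
  refine ⟨restrict p K (τ.restrictScalars F), isSwap_galActionHom_of_isSwap
    ⟨x₁, x₂, fun h => hb (congrArg Subtype.val h), Equiv.ext fun x => Subtype.ext ?_⟩⟩
  rw [galActionHom_restrict, AlgEquiv.restrictScalars_apply, Equiv.swap_apply_def]
  split_ifs with h₁ h₂
  · rw [h₁]; exact hτ₁
  · rw [h₂]; exact hτ₂
  · rcases (hroot x).mp (mem_rootSet.mp x.2).2 with ⟨a, -, ha⟩ | hx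
    · rw [ha]; exact τ.commutes a
    · rcases (hqroot x).mp hx with h | h
      · exact absurd (Subtype.ext h) h₁
      · exact absurd (Subtype.ext h) h₂

open scoped Classical in
theorem galActionHom_bijective_of_isSwap [CharZero F] {E : Type*} [Field E] [Algebra F E]
    [Fact ((p.map (algebraMap F E)).Splits)] (p_irr : Irreducible p) (p_deg : p.natDegree.Prime)
    {σ : p.Gal} (hσ : (galActionHom p E σ).IsSwap) : Function.Bijective (galActionHom p E) := by
  have hcard : Fintype.card (p.rootSet E) = p.natDegree :=
    card_rootSet_eq_natDegree p_irr.separable Fact.out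
  refine ⟨galActionHom_injective p E, MonoidHom.range_eq_top.mp ?_⟩
  refine Equiv.Perm.subgroup_eq_top_of_swap_mem (hcard ▸ p_deg) ?_ ⟨σ, rfl⟩ hσ
  rw [hcard]
  simpa only [Fintype.card_eq_nat_card,
    Nat.card_congr (MonoidHom.ofInjective (galActionHom_injective p E)).toEquiv.symm]
    using prime_degree_dvd_card p_irr p_deg

end Polynomial.Gal

theorem pow_seven_sub_pow_three_sub_one_ne_zero_of_finrank_le_three {L : Type*} [Field L]
    [Algebra (ZMod 2) L] [FiniteDimensional (ZMod 2) L] (hL : Module.finrank (ZMod 2) L ≤ 3)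
    (x : L) : x ^ 7 - x ^ 3 - 1 ≠ 0 := by
  intro hx
  have htwo : (2 : L) = 0 := by
    rw [← map_ofNat (algebraMap (ZMod 2) L) 2, show (OfNat.ofNat 2 : ZMod 2) = 0 from rfl, map_zero]
  have hx0 : x ≠ 0 := by rintro rfl; simp at hx
  let := Module.fintypeOfFintype (Module.Free.chooseBasis (ZMod 2) L)
  have hcard := FiniteField.pow_card_sub_one_eq_one x hx0
  rw [Module.card_eq_pow_finrank (K := ZMod 2), ZMod.card] at hcard
  have hpos : 0 < Module.finrank (ZMod 2) L := Module.finrank_pos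
  -- `x ^ (2 ^ d - 1) = 1` with `d ∈ {1, 2, 3}` reduces `x ^ 7 - x ^ 3 - 1` to `-1`, `x` or `-x ^ 3`.
  interval_cases Module.finrank (ZMod 2) L <;> norm_num at hcard
  · subst hcard
    norm_num at hx
  · exact hx0 (by linear_combination hx - (x ^ 4 + x + 1) * hcard + x ^ 3 * htwo)
  · exact hx0 (pow_eq_zero_iff (n := 3) (by norm_num) |>.mp (by linear_combination hcard - hx))

theorem irreducible_X_pow_seven_sub_X_pow_three_sub_one_zmod_two :
    Irreducible (X ^ 7 - X ^ 3 - 1 : (ZMod 2)[X]) := by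
  have hdeg : (X ^ 7 - X ^ 3 - 1 : (ZMod 2)[X]).natDegree = 7 := by compute_degree!
  refine Monic.irreducible_of_forall_aeval_ne_zero (by monicity!) ?_ fun L _ _ _ hL x => ?_
  · exact fun h => by simp [h] at hdeg
  · simpa using
      pow_seven_sub_pow_three_sub_one_ne_zero_of_finrank_le_three (by simpa [hdeg] using hL) x

theorem irreducible_X_pow_seven_sub_X_pow_three_sub_one :
    Irreducible (X ^ 7 - X ^ 3 - 1 : ℚ[X]) := by
  have hmonic : (X ^ 7 - X ^ 3 - 1 : ℤ[X]).Monic := by monicity!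
  have hℤ : Irreducible (X ^ 7 - X ^ 3 - 1 : ℤ[X]) :=
    hmonic.irreducible_of_irreducible_map (Int.castRingHom (ZMod 2)) _
      (by simpa using irreducible_X_pow_seven_sub_X_pow_three_sub_one_zmod_two)
  simpa using (IsPrimitive.Int.irreducible_iff_irreducible_map_cast hmonic.isPrimitive).mp hℤ

instance : Fact (Nat.Prime 2557) := ⟨by norm_num⟩

theorem map_toZMod_X_pow_seven_sub_X_pow_three_sub_one :
    (X ^ 7 - X ^ 3 - 1 : ℤ_[2557][X]).map PadicInt.toZMod =
      (∏ c ∈ {429, 698, 709, 786, 1178}, (X - C c)) * (X ^ 2 + C 1243 * X + C 838) := by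
  simp only [Polynomial.map_sub, Polynomial.map_pow, map_X, Polynomial.map_one]
  rw [Finset.prod_insert (by decide), Finset.prod_insert (by decide),
    Finset.prod_insert (by decide), Finset.prod_insert (by decide), Finset.prod_singleton]
  simp only [map_ofNat C]
  ring_nf
  reduce_mod_char

theorem irreducible_X_sq_add_C_1243_mul_X_add_C_838 :
    Irreducible (X ^ 2 + C 1243 * X + C 838 : (ZMod 2557)[X]) := by
  refine irreducible_X_sq_add_C_mul_X_add_C fun s hs => ?_
  have hsq : IsSquare ((1243 ^ 2 - 4 * 838 : ℤ) : ZMod 2557) :=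
    ⟨s, by push_cast; rw [← sq, ← hs, discrim]; ring⟩
  exact (legendreSym.eq_neg_one_iff (p := 2557)).mp (by norm_num) hsq

theorem exists_map_padic_eq_prod_X_sub_C_mul_irreducible :
    ∃ (S : Multiset ℚ_[2557]) (q : ℚ_[2557][X]), Irreducible q ∧ q.natDegree = 2 ∧
      (X ^ 7 - X ^ 3 - 1 : ℚ[X]).map (algebraMap ℚ ℚ_[2557]) = (S.map (X - C ·)).prod * q := by
  obtain ⟨S, q, hq, hqg, hfac⟩ := HenselianLocalRing.exists_eq_prod_X_sub_C_mul
    (ZMod.ringHom_surjective PadicInt.toZMod) (by monicity!)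
    map_toZMod_X_pow_seven_sub_X_pow_three_sub_one (by
      simp only [Finset.mem_insert, Finset.mem_singleton]
      rintro c (rfl | rfl | rfl | rfl | rfl) <;>
        simp only [Polynomial.map_sub, Polynomial.map_pow, map_X, Polynomial.map_one,
          derivative_sub, derivative_X_pow, derivative_one, eval_sub, eval_mul, eval_pow,
          eval_X, eval_C, eval_zero] <;> decide)
  refine ⟨S.map (algebraMap ℤ_[2557] ℚ_[2557]), q.map (algebraMap ℤ_[2557] ℚ_[2557]),
    ?_, ?_, ?_⟩
  · refine hq.irreducible_iff_irreducible_map_fraction_map.mp ?_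
    exact hq.irreducible_of_irreducible_map _ _ (hqg ▸ irreducible_X_sq_add_C_1243_mul_X_add_C_838)
  · rw [hq.natDegree_map, ← hq.natDegree_map PadicInt.toZMod, hqg]
    compute_degree!
  · have := congrArg (Polynomial.map (algebraMap ℤ_[2557] ℚ_[2557])) hfac
    simpa [Polynomial.map_multiset_prod, Multiset.map_map, Function.comp_def] using this

/-- The Galois group of `X⁷ − X³ − 1` over `ℚ` is the full symmetric
group on its 7 roots: the action of the Galois group of its splitting field on the set
of roots induces an isomorphism with `S₇`, i.e. the action homomorphism to the
permutation group of the roots is bijective and there are exactly 7 roots. -/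
theorem gal_X_pow_seven_sub_X_pow_three_sub_one_eq_symmetric :
    Function.Bijective
      (Polynomial.Gal.galActionHom (X ^ 7 - X ^ 3 - 1 : Polynomial ℚ)
        (X ^ 7 - X ^ 3 - 1 : Polynomial ℚ).SplittingField) ∧
    Nat.card
      ((X ^ 7 - X ^ 3 - 1 : Polynomial ℚ).rootSet
        (X ^ 7 - X ^ 3 - 1 : Polynomial ℚ).SplittingField) = 7 := by
  have hdeg : (X ^ 7 - X ^ 3 - 1 : ℚ[X]).natDegree = 7 := by compute_degree!
  have hirr := irreducible_X_pow_seven_sub_X_pow_three_sub_one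
  obtain ⟨S, q, hq, hq2, hfac⟩ := exists_map_padic_eq_prod_X_sub_C_mul_irreducible
  obtain ⟨σ, hσ⟩ := Gal.exists_isSwap_galActionHom_of_map_eq_prod_mul hq hq2 hq.separable hfac
    (X ^ 7 - X ^ 3 - 1 : ℚ[X]).SplittingField
  exact ⟨Gal.galActionHom_bijective_of_isSwap hirr (by rw [hdeg]; norm_num) hσ,
    Nat.card_eq_fintype_card.trans
      ((card_rootSet_eq_natDegree hirr.separable (SplittingField.splits _)).trans hdeg)⟩
end

section
/- Let ℚ̄ be an algebraic closure of ℚ. For every c ∈ ℚ̄, the polynomial (X − c)·(X⁷ − X³ − 1) is not a square in ℚ̄[X]; that is, there is no polynomial G ∈ ℚ̄[X] with G² = (X − c)·(X⁷ − X³ − 1). -/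
/-!
The septic `f = X⁷ - X³ - 1` is separable: a Bézout identity `u f + v f' = 816631` with integer
polynomials `u`, `v` shows that `f` and `f'` are coprime in characteristic zero. Over an
algebraically closed field `f` therefore has seven distinct roots, at least one of them different
from `c`, and that root is a simple root of `(X - c) f`. A square has only roots of even
multiplicity.
-/

open Polynomial

namespace Polynomial

section IsDomain

variable {R : Type*} [CommRing R] [IsDomain R]

theorem rootMultiplicity_sq {G : R[X]} (hG : G ≠ 0) (a : R) :
    (G ^ 2).rootMultiplicity a = 2 * G.rootMultiplicity a := by
  rw [sq, rootMultiplicity_mul (mul_ne_zero hG hG), two_mul]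

theorem sq_ne_of_rootMultiplicity_eq_one {p : R[X]} {a : R} (hp : p.rootMultiplicity a = 1)
    (G : R[X]) : G ^ 2 ≠ p := by
  rintro rfl
  have hG : G ≠ 0 := by
    rintro rfl
    simp at hp
  rw [rootMultiplicity_sq hG] at hp
  omega

theorem Separable.rootMultiplicity_eq_one {f : R[X]} (hf : f.Separable) {a : R}
    (ha : f.IsRoot a) : f.rootMultiplicity a = 1 :=
  le_antisymm (rootMultiplicity_le_one_of_separable hf a)
    ((rootMultiplicity_pos hf.ne_zero).2 ha)

theorem Separable.rootMultiplicity_X_sub_C_mul {f : R[X]} (hf : f.Separable) {a c : R}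
    (ha : f.IsRoot a) (hac : a ≠ c) : ((X - C c) * f).rootMultiplicity a = 1 := by
  have hc : ¬ (X - C c).IsRoot a := by simpa [sub_eq_zero] using hac
  rw [rootMultiplicity_mul (mul_ne_zero (X_sub_C_ne_zero c) hf.ne_zero),
    rootMultiplicity_eq_zero hc, hf.rootMultiplicity_eq_one ha, zero_add]

end IsDomain

theorem Separable.exists_isRoot_ne {K : Type*} [Field K] [IsAlgClosed K] {f : K[X]}
    (hf : f.Separable) (hdeg : 2 ≤ f.natDegree) (c : K) : ∃ a, f.IsRoot a ∧ a ≠ c := by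
  classical
  have hcard : 1 < f.roots.toFinset.card := by
    rw [Multiset.toFinset_card_of_nodup (nodup_roots hf), IsAlgClosed.card_roots_eq_natDegree]
    omega
  obtain ⟨a, ha, hac⟩ := Finset.exists_mem_ne hcard c
  exact ⟨a, isRoot_of_mem_roots (Multiset.mem_toFinset.1 ha), hac⟩

theorem separable_X_pow_seven_sub_X_pow_three_sub_one {K : Type*} [Field K] [CharZero K] :
    (X ^ 7 - X ^ 3 - 1 : K[X]).Separable := by
  have hderiv : derivative (X ^ 7 - X ^ 3 - 1 : K[X]) = 7 * X ^ 6 - 3 * X ^ 2 := by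
    simp only [derivative_sub, derivative_X_pow, derivative_one, sub_zero]
    norm_num [map_ofNat C]
  have hunit : C (816631⁻¹ : K) * 816631 = 1 := by
    rw [← map_ofNat C, ← C_mul, inv_mul_cancel₀ (by norm_num), C_1]
  rw [separable_def', hderiv]
  exact ⟨C 816631⁻¹ * (-816631 - 115248 * X ^ 2 + 470596 * X ^ 3 - 16128 * X ^ 4 + 65856 * X ^ 5),
    C 816631⁻¹ * (38416 + 115345 * X + 5376 * X ^ 2 + 16464 * X ^ 3 - 67228 * X ^ 4
      + 2304 * X ^ 5 - 9408 * X ^ 6), by linear_combination hunit⟩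

end Polynomial

/-- Let `ℚ̄` be an algebraic closure of `ℚ`. For every `c ∈ ℚ̄`,
the polynomial `(X − c)·(X⁷ − X³ − 1)` is not a square in `ℚ̄[X]`. -/
theorem not_isSquare_X_sub_C_mul {Qbar : Type*} [Field Qbar] [Algebra ℚ Qbar]
    [IsAlgClosure ℚ Qbar] (c : Qbar) :
    ¬ ∃ G : Polynomial Qbar,
      G ^ 2 = (X - C c) * (X ^ 7 - X ^ 3 - 1) := by
  have : IsAlgClosed Qbar := IsAlgClosure.isAlgClosed ℚ
  have : CharZero Qbar := charZero_of_injective_algebraMap (algebraMap ℚ Qbar).injective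
  have hsep := separable_X_pow_seven_sub_X_pow_three_sub_one (K := Qbar)
  have hdeg : (X ^ 7 - X ^ 3 - 1 : Qbar[X]).natDegree = 7 := by compute_degree!
  obtain ⟨a, ha, hac⟩ := hsep.exists_isRoot_ne (by omega) c
  rintro ⟨G, hG⟩
  exact sq_ne_of_rootMultiplicity_eq_one (hsep.rootMultiplicity_X_sub_C_mul ha hac) G hG
end

section
/- Let ℚ̄ be an algebraic closure of ℚ and regard ℚ̄[t][X] as polynomials in X with coefficients in the polynomial ring ℚ̄[t]. There do not exist polynomials A, B ∈ ℚ̄[t][X] and a nonzero E ∈ ℚ̄[t] such that A² − (X − t)·(X⁷ − X³ − 1)·B² = E²·(4X + 1), where X − t denotes the degree-1 polynomial in X with constant coefficient −t. -/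
open Polynomial

/-- Let `ℚ̄` be an algebraic closure of `ℚ` and regard `ℚ̄[t][X]` as
polynomials in `X` with coefficients in `ℚ̄[t]`. There do not exist `A, B ∈ ℚ̄[t][X]`
and a nonzero `E ∈ ℚ̄[t]` such that
`A² − (X − t)·(X⁷ − X³ − 1)·B² = E²·(4X + 1)`. -/
theorem no_identical_solution_cleared_denominators
    {Qbar : Type*} [Field Qbar] [Algebra ℚ Qbar] [IsAlgClosure ℚ Qbar] :
    ¬ ∃ (A B : Polynomial (Polynomial Qbar)) (E : Polynomial Qbar), E ≠ 0 ∧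
      A ^ 2 - (X - C Polynomial.X) * (X ^ 7 - X ^ 3 - 1) * B ^ 2
        = C (E ^ 2) * (4 * X + 1) := by
  rintro ⟨A, B, E, hE, h⟩
  -- evaluate at X = t
  set t : Polynomial Qbar := Polynomial.X
  have h' := congrArg (Polynomial.eval t) h
  simp only [eval_sub, eval_mul, eval_pow, eval_X, eval_C, eval_add, eval_one,
    eval_ofNat, sub_self, zero_mul, mul_zero, sub_zero] at h'
  -- h' : A.eval t ^ 2 = E ^ 2 * (4 * t + 1)
  have hlin : (4 * t + 1 : Polynomial Qbar) ≠ 0 := by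
    intro hz
    have := congrArg (Polynomial.eval 0) hz
    simp [t] at this
  have hdlin : (4 * t + 1 : Polynomial Qbar).natDegree = 1 := by
    have : (4 * t + 1 : Polynomial Qbar) = Polynomial.C 4 * Polynomial.X + Polynomial.C 1 := by
      simp [t, map_ofNat]
    rw [this, Polynomial.natDegree_linear]
    haveI : CharZero Qbar := charZero_of_injective_algebraMap (algebraMap ℚ Qbar).injective
    norm_num
  have hE2 : (E ^ 2 : Polynomial Qbar) ≠ 0 := pow_ne_zero _ hE
  have hdeg := congrArg Polynomial.natDegree h'
  rw [Polynomial.natDegree_pow, Polynomial.natDegree_mul hE2 hlin,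
    Polynomial.natDegree_pow, hdlin] at hdeg
  omega
end

section
/- Let K be an algebraic closure of the rational function field ℚ(t), and let t also denote the image in K of the independent variable of ℚ(t). There do not exist polynomials A, B ∈ K[X] with B ≠ 0 such that A² − (X − t)·(X⁷ − X³ − 1)·B² = 4X + 1. -/
/-!
Let `d` be a derivation of `K` with `d t = 1` (it exists because `K / ℚ(t)` is separable, hence
formally étale), acting on `K[X]` coefficientwise as `δ`; `δ` kills `E = X⁷ − X³ − 1` and
`F = 4X + 1` and sends `X − t` to `−1`. Applying `δ` to `A² − (X − t) E B² = F` gives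
`2 A δA = E B (2 (X − t) δB − B)`. Since `A` is coprime to `E B` but has degree `deg B + 4`, the
second factor vanishes, so `δA = 0`. Then `A² − F` is killed by `δ` and vanishes at `t`; as
`d t ≠ 0`, all its derivatives vanish at `t` too, so it is zero. But `A² = F` is impossible for
a squarefree `F`.
-/

open Polynomial Differential

theorem Derivation.exists_extension_of_formallyEtale {R S T : Type*} [CommRing R] [CommRing S]
    [CommRing T] [Algebra R S] [Algebra R T] [Algebra S T] [IsScalarTower R S T]
    [Algebra.FormallyEtale S T] (D : Derivation R S T) :
    ∃ D' : Derivation R T T, ∀ s, D' (algebraMap S T s) = D s :=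
  ⟨((LinearMap.liftBaseChange T D.liftKaehlerDifferential).restrictScalars T ∘ₗ
      (KaehlerDifferential.tensorKaehlerEquivOfFormallyEtale R S T).symm.toLinearMap).compDer
      (KaehlerDifferential.D R T), fun s => by
    simp [KaehlerDifferential.tensorKaehlerEquivOfFormallyEtale_symm_D_algebraMap]⟩

@[simp]
theorem Derivation.map_ofNat {R A M : Type*} [CommSemiring R] [CommSemiring A] [AddCommMonoid M]
    [Algebra R A] [Module A M] [Module R M] (D : Derivation R A M) (n : ℕ) [n.AtLeastTwo] :
    D (no_index (OfNat.ofNat n : A)) = 0 :=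
  D.map_natCast n

theorem RatFunc.exists_derivation_algebraMap_X_eq_one {k : Type*} [Field k] (K : Type*)
    [Field K] [Algebra (RatFunc k) K] [Algebra.IsSeparable (RatFunc k) K] :
    ∃ d : Derivation ℤ K K, d (algebraMap (RatFunc k) K RatFunc.X) = 1 := by
  -- Going through `k[X]` rather than `RatFunc k` avoids the two non-defeq `ℤ`-module
  -- structures on `RatFunc k`.
  let : Algebra k[X] K :=
    ((algebraMap (RatFunc k) K).comp (algebraMap k[X] (RatFunc k))).toAlgebra
  have : IsScalarTower k[X] (RatFunc k) K := .of_algebraMap_eq fun _ => rfl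
  have : Algebra.FormallyEtale k[X] (RatFunc k) := .of_isLocalization (nonZeroDivisors k[X])
  have : Algebra.FormallyEtale (RatFunc k) K := .of_isSeparable _ _
  have : Algebra.FormallyEtale k[X] K := .comp k[X] (RatFunc k) K
  obtain ⟨d, hd⟩ := Derivation.exists_extension_of_formallyEtale
    ((Algebra.linearMap k[X] K).compDer ((derivative' : Derivation k k[X] k[X]).restrictScalars ℤ))
  refine ⟨d, ?_⟩
  rw [← RatFunc.algebraMap_X, ← IsScalarTower.algebraMap_apply, hd]
  simp

section PellEquation

variable {R : Type*} [CommRing R]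

theorem two_mul_natDegree_of_sq_sub_mul_sq_eq [NoZeroDivisors R] {A B D F : R[X]}
    (h : A ^ 2 - D * B ^ 2 = F) (hB : B ≠ 0) (hF : F.natDegree < D.natDegree) :
    2 * A.natDegree = D.natDegree + 2 * B.natDegree := by
  have hD : D ≠ 0 := by rintro rfl; simp at hF
  have hDB : (D * B ^ 2).natDegree = D.natDegree + 2 * B.natDegree := by
    rw [natDegree_mul hD (pow_ne_zero 2 hB), natDegree_pow]
  rw [← natDegree_pow, ← sub_add_cancel (A ^ 2) (D * B ^ 2), h,
    natDegree_add_eq_right_of_natDegree_lt (by omega), hDB]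

theorem isCoprime_of_sq_sub_mul_sq_eq {A B D E F : R} (h : A ^ 2 - D * B ^ 2 = F) (hED : E ∣ D)
    (hFE : IsCoprime F E) : IsCoprime A E := by
  obtain ⟨L, rfl⟩ := hED
  have hF : A ^ 2 + -(L * B ^ 2) * E = F := by rw [← h]; ring
  rw [← IsCoprime.pow_left_iff two_pos]
  exact .of_add_mul_right_left (hF ▸ hFE)

theorem isCoprime_of_sq_sub_mul_sq_eq_of_squarefree [IsBezout R] {A B D F : R}
    (h : A ^ 2 - D * B ^ 2 = F) (hF : Squarefree F) : IsCoprime A B :=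
  IsRelPrime.isCoprime fun z hzA hzB => hF z <| by
    rw [← h]
    exact dvd_sub (by simpa [sq] using mul_dvd_mul hzA hzA)
      (dvd_mul_of_dvd_right (by simpa [sq] using mul_dvd_mul hzB hzB) D)

end PellEquation

namespace Differential

section CommRing

variable {R : Type*} [CommRing R] [Differential R]

theorem natDegree_mapCoeffs_le (p : R[X]) : (mapCoeffs p).natDegree ≤ p.natDegree :=
  natDegree_le_iff_coeff_eq_zero.2 fun n hn => by
    rw [coeff_mapCoeffs, coeff_eq_zero_of_natDegree_lt hn, Derivation.map_zero]

theorem mapCoeffs_derivative (p : R[X]) :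
    mapCoeffs (derivative p) = derivative (mapCoeffs p) := by
  ext n
  simp [coeff_derivative, Derivation.leibniz, mul_comm]

theorem deriv_eval (x : R) (p : R[X]) :
    (p.eval x)′ = (mapCoeffs p).eval x + (derivative p).eval x * x′ := by
  simpa only [coe_aeval_eq_eval] using deriv_aeval_eq x p

theorem eq_zero_of_mapCoeffs_eq_zero_of_isRoot [NoZeroDivisors R] [IsAddTorsionFree R] {x : R}
    (hx : x′ ≠ 0) {p : R[X]} (hp : mapCoeffs p = 0) (hroot : p.IsRoot x) : p = 0 := by
  induction hn : p.natDegree using Nat.strong_induction_on generalizing p with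
  | _ n ih =>
  have hroot' : (derivative p).IsRoot x := by
    have := congrArg (·′) hroot.eq_zero
    simp only [deriv_eval, hp, eval_zero, zero_add, Derivation.map_zero] at this
    exact (mul_eq_zero.1 this).resolve_right hx
  have hderiv : derivative p = 0 := by
    rcases n.eq_zero_or_pos with h0 | hpos
    · exact derivative_eq_zero.2 (hn.trans h0)
    · exact ih _ (hn ▸ natDegree_derivative_lt (by omega))
        (by rw [mapCoeffs_derivative, hp, derivative_zero]) hroot' rfl
  rw [eq_C_of_natDegree_eq_zero (derivative_eq_zero.1 hderiv)] at hroot ⊢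
  rw [IsRoot, eval_C] at hroot
  rw [hroot, C_0]

end CommRing

variable {K : Type*} [Field K] [CharZero K] [Differential K]

theorem mapCoeffs_eq_zero_of_sq_sub_mul_sq_eq {τ : K} {A B E F : K[X]}
    (h : A ^ 2 - (X - C τ) * E * B ^ 2 = F) (hE : mapCoeffs E = 0) (hF : mapCoeffs F = 0)
    (hcop : IsCoprime A (E * B)) (hdeg : B.natDegree + 2 ≤ A.natDegree) : mapCoeffs A = 0 := by
  set G := 2 * (X - C τ) * mapCoeffs B - C τ′ * B
  have key : 2 * A * mapCoeffs A = E * B * G := by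
    have := congrArg mapCoeffs h
    simp only [map_sub, Derivation.leibniz, Derivation.leibniz_pow, hE, hF, mapCoeffs_X,
      mapCoeffs_C, smul_eq_mul] at this
    linear_combination this
  have hG : G = 0 := by
    by_contra hG
    have hdvd : A ∣ G := hcop.dvd_of_dvd_mul_left ⟨2 * mapCoeffs A, by rw [← key]; ring⟩
    have hlin : (2 * (X - C τ) : K[X]).natDegree ≤ 1 := by compute_degree
    have : G.natDegree ≤ B.natDegree + 1 :=
      (natDegree_sub_le _ _).trans <| max_le
        (natDegree_mul_le.trans (by have := natDegree_mapCoeffs_le B; omega))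
        (natDegree_C_mul_le _ _ |>.trans B.natDegree.le_succ)
    have := natDegree_le_of_dvd hdvd hG
    omega
  have hA : A ≠ 0 := by rintro rfl; simp at hdeg
  rw [hG, mul_zero] at key
  simpa [hA] using key

theorem not_exists_sq_sub_mul_sq_eq {τ : K} (hτ : τ′ ≠ 0) {E F : K[X]} (hE : mapCoeffs E = 0)
    (hF : mapCoeffs F = 0) (hFsq : Squarefree F) (hFE : IsCoprime F E)
    (hdeg : F.natDegree ≤ E.natDegree) (hE3 : 3 ≤ E.natDegree) :
    ¬ ∃ A B : K[X], B ≠ 0 ∧ A ^ 2 - (X - C τ) * E * B ^ 2 = F := by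
  rintro ⟨A, B, hB, h⟩
  have hE0 : E ≠ 0 := by rintro rfl; simp at hE3
  have hLE : ((X - C τ) * E).natDegree = E.natDegree + 1 := by
    rw [natDegree_mul (X_sub_C_ne_zero τ) hE0, natDegree_X_sub_C, add_comm]
  have hAB : B.natDegree + 2 ≤ A.natDegree := by
    have := two_mul_natDegree_of_sq_sub_mul_sq_eq h hB (by omega)
    omega
  have hcop : IsCoprime A (E * B) :=
    (isCoprime_of_sq_sub_mul_sq_eq h (dvd_mul_left E _) hFE).mul_right
      (isCoprime_of_sq_sub_mul_sq_eq_of_squarefree h hFsq)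
  have hA := mapCoeffs_eq_zero_of_sq_sub_mul_sq_eq h hE hF hcop hAB
  have hAF : A ^ 2 - F = 0 := by
    refine eq_zero_of_mapCoeffs_eq_zero_of_isRoot hτ (by simp [hA, hF]) ?_
    rw [IsRoot, ← h, sub_sub_cancel]
    simp
  have : IsUnit A := hFsq A (by rw [← sub_eq_zero.1 hAF, sq])
  have := natDegree_eq_zero_of_isUnit this
  omega

end Differential

/-- Let `K` be an algebraic closure of `ℚ(t)` and let `t` also denote
the image in `K` of the independent variable. There do not exist `A, B ∈ K[X]` with
`B ≠ 0` such that `A² − (X − t)·(X⁷ − X³ − 1)·B² = 4X + 1`. -/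
theorem no_nontrivial_solution_over_closure
    {K : Type*} [Field K] [Algebra (RatFunc ℚ) K] [IsAlgClosure (RatFunc ℚ) K] :
    ¬ ∃ A B : Polynomial K, B ≠ 0 ∧
      A ^ 2 - (X - C (algebraMap (RatFunc ℚ) K RatFunc.X)) *
        (X ^ 7 - X ^ 3 - 1) * B ^ 2 = 4 * X + 1 := by
  have : Algebra.IsAlgebraic (RatFunc ℚ) K := IsAlgClosure.isAlgebraic
  have : CharZero K := (RingHom.charZero_iff (algebraMap (RatFunc ℚ) K).injective).1 inferInstance
  obtain ⟨d, hd⟩ := RatFunc.exists_derivation_algebraMap_X_eq_one (k := ℚ) K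
  let : Differential K := ⟨d⟩
  have hE7 : (X ^ 7 - X ^ 3 - 1 : K[X]).natDegree = 7 := by compute_degree!
  have hF1 : (4 * X + 1 : K[X]).natDegree = 1 := by compute_degree!
  have hFirr : Irreducible (4 * X + 1 : K[X]) :=
    irreducible_of_degree_eq_one (degree_eq_iff_natDegree_eq_of_pos one_pos |>.2 hF1)
  refine not_exists_sq_sub_mul_sq_eq (hd.trans_ne one_ne_zero) (by simp)
    (by simp) hFirr.squarefree ?_ (by omega) (by omega)
  rw [hFirr.coprime_iff_not_dvd]
  intro hdvd
  have := eval_eq_zero_of_dvd_of_eval_eq_zero hdvd (x := -4⁻¹) (by norm_num)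
  norm_num at this
end

section
/- Let ℚ(t) be the rational function field in one variable t over ℚ, and let t also denote its image as a constant of the polynomial ring ℚ(t)[X]. There do not exist polynomials A, B ∈ ℚ(t)[X] such that A² − (X⁶ + X + t)·B² = −(X⁶ + X). -/
open Polynomial

/-- Let `ℚ(t)` be the rational function field and let `t` also denote
its image as a constant of `ℚ(t)[X]`. There do not exist `A, B ∈ ℚ(t)[X]` such that
`A² − (X⁶ + X + t)·B² = −(X⁶ + X)`. -/
theorem no_solution_over_ratFunc :
    ¬ ∃ A B : Polynomial (RatFunc ℚ),
      A ^ 2 - (X ^ 6 + X + C RatFunc.X) * B ^ 2 = -(X ^ 6 + X) := by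
  rintro ⟨A, B, hAB⟩
  -- the substitution polynomial
  set q0 : ℚ[X] := -(X ^ 6 + X) with hq0
  have hq0deg : q0.natDegree = 6 := by
    rw [hq0, natDegree_neg]
    compute_degree!
  -- injective endomorphism of ℚ[X] sending X to q0
  have haevalinj : Function.Injective (aeval q0 : ℚ[X] →ₐ[ℚ] ℚ[X]) := by
    intro p1 p2 h
    have h' : (p1 - p2).comp q0 = 0 := by
      have : aeval q0 (p1 - p2) = 0 := by rw [map_sub, h, sub_self]
      simpa [aeval_def, eval₂_eq_eval_map, Polynomial.comp] using this
    rcases comp_eq_zero_iff.mp h' with h0 | ⟨_, hc⟩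
    · exact sub_eq_zero.mp h0
    · exfalso
      have := congrArg natDegree hc
      rw [hq0deg, natDegree_C] at this
      exact (by norm_num : (6 : ℕ) ≠ 0) this
  let g : ℚ[X] →+* RatFunc ℚ :=
    (algebraMap ℚ[X] (RatFunc ℚ)).comp (aeval q0 : ℚ[X] →ₐ[ℚ] ℚ[X]).toRingHom
  have hginj : Function.Injective g :=
    (IsFractionRing.injective ℚ[X] (RatFunc ℚ)).comp haevalinj
  let φ : RatFunc ℚ →+* RatFunc ℚ := IsFractionRing.lift hginj
  have hφt : φ RatFunc.X = algebraMap ℚ[X] (RatFunc ℚ) q0 := by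
    rw [← RatFunc.algebraMap_X, IsFractionRing.lift_algebraMap]
    simp [g]
  -- apply eval₂ φ RatFunc.X to the equation
  have key := congrArg (eval₂ φ RatFunc.X) hAB
  simp only [eval₂_sub, eval₂_add, eval₂_mul, eval₂_pow, eval₂_X, eval₂_C, eval₂_neg] at key
  rw [hφt] at key
  have hz : RatFunc.X ^ 6 + RatFunc.X + algebraMap ℚ[X] (RatFunc ℚ) q0 = 0 := by
    rw [hq0]
    push_cast [map_neg, map_add, map_pow, RatFunc.algebraMap_X]
    ring
  rw [hz, zero_mul, sub_zero] at key
  -- now key : (eval₂ φ RatFunc.X A)^2 = -(X^6 + X)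
  set a : RatFunc ℚ := eval₂ φ RatFunc.X A with ha
  -- clear denominators
  have hd : algebraMap ℚ[X] (RatFunc ℚ) a.denom ≠ 0 := by
    simpa using (RatFunc.denom_ne_zero a)
  have hnum : (algebraMap ℚ[X] (RatFunc ℚ)) (a.num ^ 2) =
      (algebraMap ℚ[X] (RatFunc ℚ)) (q0 * a.denom ^ 2) := by
    have h2 : a ^ 2 = algebraMap ℚ[X] (RatFunc ℚ) q0 := by
      rw [key, hq0]
      push_cast [map_neg, map_add, map_pow, RatFunc.algebraMap_X]
      ring
    have hna : algebraMap ℚ[X] (RatFunc ℚ) a.num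
        = a * algebraMap ℚ[X] (RatFunc ℚ) a.denom := by
      have h : (algebraMap ℚ[X] (RatFunc ℚ) a.num / algebraMap ℚ[X] (RatFunc ℚ) a.denom)
            * algebraMap ℚ[X] (RatFunc ℚ) a.denom
          = a * algebraMap ℚ[X] (RatFunc ℚ) a.denom := by
        rw [RatFunc.num_div_denom]
      rw [div_mul_cancel₀ _ hd] at h
      exact h
    push_cast [map_mul, map_pow]
    rw [hna, mul_pow, h2]
  have hpoly : a.num ^ 2 = q0 * a.denom ^ 2 :=
    IsFractionRing.injective ℚ[X] (RatFunc ℚ) hnum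
  -- root multiplicity at 0
  have hq0ne : q0 ≠ 0 := by
    intro h
    rw [h, natDegree_zero] at hq0deg
    exact (by norm_num : (0:ℕ) ≠ 6) hq0deg
  have hdne : a.denom ≠ 0 := RatFunc.denom_ne_zero a
  have hnne : a.num ≠ 0 := by
    intro h
    rw [h] at hpoly
    exact (mul_ne_zero hq0ne (pow_ne_zero 2 hdne)) (by rw [← hpoly]; ring)
  have hrmq0 : rootMultiplicity (0:ℚ) q0 = 1 := by
    have hfac : q0 = (X - C 0) * (-(X^5 + 1)) := by rw [hq0, map_zero]; ring
    rw [hfac, rootMultiplicity_mul (by rw [← hfac]; exact hq0ne),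
      rootMultiplicity_X_sub_C_self, rootMultiplicity_eq_zero]
    · simp [IsRoot]
  have hrmn : rootMultiplicity (0:ℚ) (a.num ^ 2) = 2 * rootMultiplicity 0 a.num := by
    rw [pow_two, rootMultiplicity_mul (mul_ne_zero hnne hnne), two_mul]
  have hrmd : rootMultiplicity (0:ℚ) (q0 * a.denom ^ 2)
      = 1 + 2 * rootMultiplicity 0 a.denom := by
    rw [rootMultiplicity_mul (mul_ne_zero hq0ne (pow_ne_zero 2 hdne)), hrmq0,
      pow_two, rootMultiplicity_mul (mul_ne_zero hdne hdne), two_mul]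
  have := congrArg (rootMultiplicity (0:ℚ)) hpoly
  rw [hrmn, hrmd] at this
  omega
end

section
/- Let K be an algebraic closure of the rational function field ℚ(t), and let t also denote the image in K of the independent variable of ℚ(t). There do not exist polynomials A, B ∈ K[X] with B ≠ 0 such that A² − (X⁴ + X² + t·X)·B² = X − 1. -/
/-!
Specialize `t ↦ 0`. Dominating the localization of `ℚ[X]` at `(X)` gives a valuation subring of
`K` whose maximal ideal contains `t` and whose residue field has characteristic zero. The equation
`A² - D B² = e² (X - 1)` is homogeneous in `(A, B, e)`, so a solution with `e = 1` rescales to a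
primitive one over the valuation ring, and reduces to a solution of
`A² - (X⁴ + X²) B² = e² (X - 1)` with `(A, B, e) ≠ 0` over the residue field.

There, `Y = X B` solves `A² - (X² + 1) Y² = c (X - 1)` with `A(0) Y(0) = 0`. Multiplying
`A + Y √(X² + 1)` by the unit `X - √(X² + 1)` of norm `-1` gives the solution
`(X A - (X² + 1) Y, X Y - A)` of the same shape with `c` replaced by `-c`. Since
`(A - X Y)(A + X Y) = Y² + c (X - 1)` while `(A + X Y) - (A - X Y) = 2 X Y`, one of `A ∓ X Y` has
degree below `deg Y` (after changing the sign of `Y`), so this strictly lowers `deg Y`, until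
`A = X Y`; then `-Y² = c (X - 1)`, which forces `Y = 0`, `c = 0` by parity of degrees.
-/

open Polynomial

namespace Polynomial

variable {R : Type*} [CommRing R] [IsDomain R]

theorem min_natDegree_add_natDegree_sub_le {p q : R[X]} (h : p * q ≠ 0) :
    min p.natDegree q.natDegree + (q - p).natDegree ≤ (p * q).natDegree := by
  rw [natDegree_mul (left_ne_zero_of_mul h) (right_ne_zero_of_mul h)]
  have := natDegree_sub_le q p
  omega

theorem sq_eq_C_mul_X_sub_one_iff {A : R[X]} {c : R} :
    A ^ 2 = C c * (X - 1) ↔ A = 0 ∧ c = 0 := by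
  refine ⟨fun h => ?_, fun ⟨hA, hc⟩ => by simp [hA, hc]⟩
  by_cases hc : c = 0
  · simp_all
  · have := congrArg natDegree h
    rw [natDegree_pow, natDegree_C_mul hc, ← C_1, natDegree_X_sub_C] at this
    omega

theorem eq_zero_of_sq_sub_X_sq_add_one_mul_sq (h2 : (2 : R) ≠ 0) {A Y : R[X]} {c : R}
    (h : A ^ 2 - (X ^ 2 + 1) * Y ^ 2 = C c * (X - 1)) (h0 : A.coeff 0 * Y.coeff 0 = 0) :
    Y = 0 := by
  induction hm : Y.natDegree using Nat.strong_induction_on generalizing A Y c with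
  | _ m ih =>
  by_contra hY
  have hfac : (A - X * Y) * (A + X * Y) = Y ^ 2 + C c * (X - 1) := by linear_combination h
  have hR : Y ^ 2 + C c * (X - 1) ≠ 0 := fun hR =>
    hY (sq_eq_C_mul_X_sub_one_iff.mp (by rw [C_neg]; linear_combination hR)).1
  have hdeg : min (A - X * Y).natDegree (A + X * Y).natDegree + (m + 1) ≤ max (2 * m) 1 := by
    have hmin := min_natDegree_add_natDegree_sub_le (hfac ▸ hR)
    rw [hfac, show A + X * Y - (A - X * Y) = C 2 * (X * Y) by rw [C_ofNat]; ring,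
      natDegree_C_mul h2, natDegree_X_mul hY, hm] at hmin
    refine hmin.trans ((natDegree_add_le _ _).trans (max_le_max ?_ ?_))
    · exact natDegree_pow_le.trans (by rw [hm])
    · exact natDegree_C_mul_le _ _ |>.trans (by rw [← C_1, natDegree_X_sub_C])
  obtain ⟨Z, hZ, hZdeg⟩ : ∃ Z, (Z = Y ∨ Z = -Y) ∧
      (A - X * Z).natDegree + (m + 1) ≤ max (2 * m) 1 := by
    rcases le_total (A - X * Y).natDegree (A + X * Y).natDegree with hle | hle
    · exact ⟨Y, .inl rfl, by rwa [min_eq_left hle] at hdeg⟩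
    · exact ⟨-Y, .inr rfl, by rwa [mul_neg, sub_neg_eq_add, ← min_eq_right hle]⟩
  have hZsq : Z ^ 2 = Y ^ 2 := by rcases hZ with rfl | rfl <;> ring
  have hZ0 : A.coeff 0 * Z.coeff 0 = 0 := by rcases hZ with rfl | rfl <;> simp [h0]
  have hZne : Z ≠ 0 := by rcases hZ with rfl | rfl <;> simpa using hY
  have hZm : Z.natDegree = m := by rcases hZ with rfl | rfl <;> simp [hm]
  have hAZ : A - X * Z = 0 := by
    rcases m with _ | m
    · have hZc : Z.coeff 0 ≠ 0 := fun h => hZne (by rw [eq_C_of_natDegree_eq_zero hZm, h, C_0])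
      rw [eq_C_of_natDegree_eq_zero (p := A - X * Z) (by omega)]
      simp [(mul_eq_zero.mp hZ0).resolve_right hZc]
    · have := ih _ (by rw [natDegree_sub]; omega) (A := X * A - (X ^ 2 + 1) * Z)
        (Y := X * Z - A) (c := -c)
        (by rw [C_neg]; linear_combination (-1) * h + (X ^ 2 + 1) * hZsq)
        (by simpa [mul_coeff_zero, mul_comm] using hZ0) rfl
      linear_combination -this
  exact hR (by linear_combination (-1) * h + (A + X * Z) * hAZ + X ^ 2 * hZsq)

theorem eq_zero_of_sq_sub_X_pow_four_add_X_sq_mul_sq (h2 : (2 : R) ≠ 0) {A B : R[X]} {e : R}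
    (h : A ^ 2 - (X ^ 4 + X ^ 2) * B ^ 2 = C e ^ 2 * (X - 1)) : A = 0 ∧ B = 0 ∧ e = 0 := by
  have hXB : X * B = 0 := eq_zero_of_sq_sub_X_sq_add_one_mul_sq h2 (A := A) (c := e ^ 2)
    (by rw [C_pow]; linear_combination h) (by simp)
  have hB : B = 0 := (mul_eq_zero.mp hXB).resolve_left X_ne_zero
  rw [hB] at h
  obtain ⟨hA, he⟩ := (sq_eq_C_mul_X_sub_one_iff (A := A) (c := e ^ 2)).mp (by
    rw [C_pow]; linear_combination h)
  exact ⟨hA, hB, pow_eq_zero_iff two_ne_zero |>.mp he⟩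

end Polynomial

namespace ValuationSubring

variable {K : Type*} [Field K]

theorem exists_ringHom_isUnit_iff_notMem {R : Type*} [CommRing R] (g : R →+* K) (P : Ideal R)
    [P.IsPrime] (hg : RingHom.ker g ≤ P) :
    ∃ (V : ValuationSubring K) (f : R →+* V),
      (∀ r, (f r : K) = g r) ∧ ∀ r, IsUnit (f r) ↔ r ∉ P := by
  have hunit : ∀ y : P.primeCompl, IsUnit (g y) := fun y =>
    isUnit_iff_ne_zero.mpr fun hy => y.2 (hg hy)
  let F := IsLocalization.lift (S := Localization.AtPrime P) hunit
  obtain ⟨V, hV, hloc⟩ := IsLocalRing.exists_factor_valuationRing F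
  refine ⟨V, (F.codRestrict V.toSubring hV).comp (algebraMap R _),
    fun r => IsLocalization.lift_eq hunit r, fun r => ?_⟩
  rw [RingHom.comp_apply, isUnit_map_iff, IsLocalization.AtPrime.isUnit_to_map_iff _ P]
  rfl

theorem exists_map_subtype_eq_C_mul {V : ValuationSubring K} {s : K} {P : K[X]}
    (hP : ∀ y ∈ P.coeffs, s * y ∈ V) :
    ∃ P' : V[X], P'.map V.subtype = C s * P ∧
      ∀ n, s * P.coeff n = 1 → P'.map (IsLocalRing.residue V) ≠ 0 := by
  have hlifts : C s * P ∈ lifts V.subtype := (lifts_iff_coeff_lifts _).mpr fun n => by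
    by_cases hn : P.coeff n = 0
    · exact ⟨0, by simp [hn]⟩
    · exact ⟨⟨_, hP _ (coeff_mem_coeffs hn)⟩, by simp⟩
  obtain ⟨P', hP'⟩ := (mem_lifts _).mp hlifts
  refine ⟨P', hP', fun n hn h0 => ?_⟩
  have h1 : P'.coeff n = 1 := Subtype.ext <| by
    simpa [hn] using congrArg (coeff · n) hP'
  simpa [h1] using congrArg (coeff · n) h0

theorem exists_primitive_multiple (V : ValuationSubring K) (A B : K[X]) :
    ∃ (s : V) (A' B' : V[X]), A'.map V.subtype = C (s : K) * A ∧
      B'.map V.subtype = C (s : K) * B ∧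
      (IsLocalRing.residue V s ≠ 0 ∨ A'.map (IsLocalRing.residue V) ≠ 0 ∨
        B'.map (IsLocalRing.residue V) ≠ 0) := by
  classical
  obtain ⟨x, hx, hmax⟩ := (insert 1 (A.coeffs ∪ B.coeffs)).exists_max_image V.valuation
    ⟨1, Finset.mem_insert_self _ _⟩
  have hx1 : 1 ≤ V.valuation x := by simpa using hmax 1 (Finset.mem_insert_self _ _)
  have hx0 : x ≠ 0 := by rintro rfl; simp at hx1
  have hmem : ∀ y ∈ insert 1 (A.coeffs ∪ B.coeffs), x⁻¹ * y ∈ V := fun y hy =>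
    (V.valuation_le_one_iff _).mp <| by
      rw [map_mul, map_inv₀]
      exact inv_mul_le_one_of_le₀ (hmax y hy) zero_le
  have hinv : x⁻¹ ∈ V := by simpa using hmem 1 (Finset.mem_insert_self _ _)
  obtain ⟨A', hA', hA1⟩ := exists_map_subtype_eq_C_mul (V := V) (P := A) fun y hy =>
    hmem y (by simp [hy])
  obtain ⟨B', hB', hB1⟩ := exists_map_subtype_eq_C_mul (V := V) (P := B) fun y hy =>
    hmem y (by simp [hy])
  refine ⟨⟨x⁻¹, hinv⟩, A', B', hA', hB', ?_⟩
  rcases Finset.mem_insert.mp hx with rfl | hx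
  · left
    rw [show (⟨(1 : K)⁻¹, hinv⟩ : V) = 1 from Subtype.ext inv_one, map_one]
    exact one_ne_zero
  · rcases Finset.mem_union.mp hx with hx | hx <;>
      obtain ⟨n, -, rfl⟩ := mem_coeffs_iff.mp hx
    · exact .inr (.inl (hA1 n (inv_mul_cancel₀ hx0)))
    · exact .inr (.inr (hB1 n (inv_mul_cancel₀ hx0)))

theorem exists_residue_X_eq_zero {F : Type*} [Field F] (h2 : (2 : F) ≠ 0)
    (g : F[X] →+* K) (hg : Function.Injective g) :
    ∃ (V : ValuationSubring K) (t : V), (t : K) = g X ∧ IsLocalRing.residue V t = 0 ∧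
      (2 : IsLocalRing.ResidueField V) ≠ 0 := by
  have : (Ideal.span {X} : Ideal F[X]).IsPrime :=
    (Ideal.span_singleton_prime X_ne_zero).mpr prime_X
  obtain ⟨V, f, hf, hunit⟩ := exists_ringHom_isUnit_iff_notMem g (Ideal.span {X})
    (by simp [(RingHom.injective_iff_ker_eq_bot g).mp hg])
  refine ⟨V, f X, hf X, (IsLocalRing.residue_eq_zero_iff _).mpr ?_, ?_⟩
  · rw [IsLocalRing.mem_maximalIdeal, _root_.mem_nonunits_iff, hunit, not_not]
    exact Ideal.subset_span rfl
  · rw [← map_ofNat (IsLocalRing.residue V) 2, ← map_ofNat f 2,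
      IsLocalRing.residue_ne_zero_iff_isUnit, hunit, Ideal.mem_span_singleton, X_dvd_iff]
    simpa using h2

end ValuationSubring

theorem no_nontrivial_solution_genus_one_family_general
    {K : Type*} [Field K] [Algebra (RatFunc ℚ) K] :
    ¬ ∃ A B : Polynomial K, B ≠ 0 ∧
      A ^ 2 - (X ^ 4 + X ^ 2 + C (algebraMap (RatFunc ℚ) K RatFunc.X) * X) * B ^ 2
        = X - 1 := by
  rintro ⟨A, B, -, h⟩
  obtain ⟨V, t, ht, ht0, h2⟩ := ValuationSubring.exists_residue_X_eq_zero
    (by norm_num : (2 : ℚ) ≠ 0)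
    ((algebraMap (RatFunc ℚ) K).comp (algebraMap ℚ[X] (RatFunc ℚ)))
    ((algebraMap (RatFunc ℚ) K).injective.comp (IsFractionRing.injective _ _))
  rw [RingHom.comp_apply, RatFunc.algebraMap_X] at ht
  obtain ⟨s, A', B', hA, hB, hprim⟩ := V.exists_primitive_multiple A B
  have hV : A' ^ 2 - (X ^ 4 + X ^ 2 + C t * X) * B' ^ 2 = C s ^ 2 * (X - 1) := by
    apply map_injective V.subtype V.subtype_injective
    simp only [Polynomial.map_sub, Polynomial.map_mul, Polynomial.map_pow, Polynomial.map_add,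
      Polynomial.map_X, Polynomial.map_C, Polynomial.map_one, hA, hB, V.subtype_apply, ht]
    linear_combination C (s : K) ^ 2 * h
  have hk := congrArg (map (IsLocalRing.residue V)) hV
  simp only [Polynomial.map_sub, Polynomial.map_mul, Polynomial.map_pow, Polynomial.map_add,
    Polynomial.map_X, Polynomial.map_C, Polynomial.map_one, ht0, C_0, zero_mul, add_zero] at hk
  obtain ⟨hA0, hB0, hs0⟩ := eq_zero_of_sq_sub_X_pow_four_add_X_sq_mul_sq h2 hk
  tauto

/-- Let `K` be an algebraic closure of `ℚ(t)` and let `t` also denote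
the image in `K` of the independent variable. There do not exist `A, B ∈ K[X]` with
`B ≠ 0` such that `A² − (X⁴ + X² + t·X)·B² = X − 1`. -/
theorem no_nontrivial_solution_genus_one_family
    {K : Type*} [Field K] [Algebra (RatFunc ℚ) K] [IsAlgClosure (RatFunc ℚ) K] :
    ¬ ∃ A B : Polynomial K, B ≠ 0 ∧
      A ^ 2 - (X ^ 4 + X ^ 2 + C (algebraMap (RatFunc ℚ) K RatFunc.X) * X) * B ^ 2
        = X - 1 :=
  no_nontrivial_solution_genus_one_family_general
end

section
/- Let t₀ ∈ ℂ. If there exist polynomials A₁, B₁ ∈ ℂ[X] with B₁ ≠ 0 such that A₁² − (X⁴ + X² + t₀·X)·B₁² = X − 1, then there exist polynomials A, B ∈ ℂ[X] with B ≠ 0 such that A² − (X¹² + X⁴ + t₀)·B² = X⁴ − 1; indeed one may take A = A₁(X⁴) and B = X²·B₁(X⁴). -/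
open Polynomial

/-- Let `t₀ ∈ ℂ`. If `A₁, B₁ ∈ ℂ[X]` with `B₁ ≠ 0` satisfy
`A₁² − (X⁴ + X² + t₀·X)·B₁² = X − 1`, then `A = A₁(X⁴)` and `B = X²·B₁(X⁴)` give a
non-trivial solution of `A² − (X¹² + X⁴ + t₀)·B² = X⁴ − 1`. -/
theorem solution_transfer (t₀ : ℂ) (A₁ B₁ : Polynomial ℂ) (hB₁ : B₁ ≠ 0)
    (h : A₁ ^ 2 - (X ^ 4 + X ^ 2 + C t₀ * X) * B₁ ^ 2 = X - 1) :
    X ^ 2 * B₁.comp (X ^ 4) ≠ 0 ∧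
    (A₁.comp (X ^ 4)) ^ 2 -
      (X ^ 12 + X ^ 4 + C t₀) * (X ^ 2 * B₁.comp (X ^ 4)) ^ 2 = X ^ 4 - 1 := by
  constructor
  · intro hc
    rcases mul_eq_zero.mp hc with h1 | h2
    · exact pow_ne_zero 2 (X_ne_zero (R := ℂ)) h1
    · rw [comp_eq_zero_iff] at h2
      rcases h2 with h2 | ⟨_, h2⟩
      · exact hB₁ h2
      · have := congrArg natDegree h2
        simp at this
  · have h2 := congrArg (fun p => p.comp (X ^ 4 : Polynomial ℂ)) h
    simp only [sub_comp, mul_comp, pow_comp, add_comp, X_comp, C_comp, one_comp] at h2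
    rw [show ((X:Polynomial ℂ) ^ 2 * B₁.comp (X ^ 4)) ^ 2 = X ^ 4 * (B₁.comp (X^4))^2 by ring]
    rw [← h2]; ring
end

section
/- The set of complex numbers t₀ for which there exist polynomials A, B ∈ ℂ[X] with B ≠ 0 satisfying A² − (X¹² + X⁴ + t₀)·B² = X⁴ − 1 is infinite. -/
/-!
Substituting `X ↦ X²` and multiplying by `i` reduces the problem to real `t` and the halved
equation `p² − (X⁶ + X² + t)·q² = 1 − X²` over `ℝ`. Expanding `√(X⁶ + X² + t)` as a continued
fraction with partial quotients `(2 / eₙ)·X` gives convergents `pₙ, qₙ` with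
`pₙ² − (X⁶ + X² + t)·qₙ² = (−1)ⁿ (eₙ X² + fₙ)`, where `fₙ` alternates `1, t, 1, t, …` and
`eₙ₊₂ = −eₙ − 4 fₙ₊₁ / eₙ₊₁²`; so it suffices to find `t` with `e₄ₖ₊₂ = −1`.

For small `t > 0` the sequence `e` runs in blocks of four with signs `+, −, −, +`, and
`sⱼ = −e₄ⱼ₊₂` grows by at least `4t` and at most `4t + O(sⱼ² t + t² sⱼ)` per block, so that
`4(k+1)t ≤ sₖ ≤ 4z + 32z³` with `z = (k+1)t`. Hence `sₖ` crosses `1` for some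
`t ∈ [1/(6(k+1)), 1/(4(k+1))]`, and these values of `t` accumulate at `0`.
-/

open Polynomial

namespace AlmostPell

section Convergents

variable {K : Type*} [Field K]

/-- `normLead t n` and `normConst t n` are the coefficients `eₙ`, `fₙ` in
`pₙ² − (X⁶ + X² + t)·qₙ² = (−1)ⁿ (eₙ X² + fₙ)` (see `convergent_norms`). As `x / 0 = 0`, the
terms after a vanishing `eₙ` are junk, hence the nonvanishing hypotheses below. -/
def normConst (t : K) (n : ℕ) : K := if Even n then 1 else t

def normLead (t : K) : ℕ → K
  | 0 => 0
  | 1 => 1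
  | n + 2 => -normLead t n - 4 * normConst t (n + 1) / normLead t (n + 1) ^ 2

lemma normConst_of_even (t : K) {n : ℕ} (hn : Even n) : normConst t n = 1 := if_pos hn

lemma normConst_of_odd (t : K) {n : ℕ} (hn : Odd n) : normConst t n = t :=
  if_neg (Nat.not_even_iff_odd.mpr hn)

lemma normConst_add_two (t : K) (n : ℕ) : normConst t (n + 2) = normConst t n := by
  simp [normConst, Nat.even_add]

lemma normLead_add_two (t : K) (n : ℕ) :
    normLead t (n + 2) = -normLead t n - 4 * normConst t (n + 1) / normLead t (n + 1) ^ 2 := rfl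

/-- The identity `(pₙ₊₁pₙ − D qₙ₊₁qₙ)² − (pₙ² − D qₙ²)(pₙ₊₁² − D qₙ₊₁²) = D`, read off on the
`X²`-coefficient. -/
theorem normLead_conservation (t : K) (n : ℕ)
    (hne : ∀ m, 0 < m → m ≤ n → normLead t m ≠ 0) :
    normLead t n ^ 2 * normLead t (n + 1) ^ 2 + 4 * normConst t (n + 1) * normLead t n
      + 4 * normConst t n * normLead t (n + 1) = 4 := by
  induction n with
  | zero => simp [normLead, normConst]
  | succ n ih =>
    have h := ih fun m hm hmn => hne m hm (hmn.trans n.le_succ)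
    have he : normLead t (n + 1) ≠ 0 := hne (n + 1) n.succ_pos le_rfl
    rw [normLead_add_two, normConst_add_two]
    field_simp
    linear_combination normLead t (n + 1) ^ 2 * h

def continuant {R : Type*} [Semiring R] (a : ℕ → R) (u v : R) : ℕ → R
  | 0 => u
  | 1 => v
  | n + 2 => a (n + 1) * continuant a u v (n + 1) + continuant a u v n

noncomputable def partialQuot (t : K) (n : ℕ) : K[X] := C (2 / normLead t n) * X

noncomputable def convNum (t : K) : ℕ → K[X] := continuant (partialQuot t) 1 (X ^ 3)

noncomputable def convDen (t : K) : ℕ → K[X] := continuant (partialQuot t) 0 1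

theorem convergent_norms (t : K) (n : ℕ) (hne : ∀ m, 0 < m → m ≤ n → normLead t m ≠ 0) :
    convNum t n ^ 2 - (X ^ 6 + X ^ 2 + C t) * convDen t n ^ 2
        = (-1) ^ n * (C (normLead t n) * X ^ 2 + C (normConst t n)) ∧
      convNum t (n + 1) ^ 2 - (X ^ 6 + X ^ 2 + C t) * convDen t (n + 1) ^ 2
        = (-1) ^ (n + 1) * (C (normLead t (n + 1)) * X ^ 2 + C (normConst t (n + 1))) ∧
      2 * (convNum t (n + 1) * convNum t n
          - (X ^ 6 + X ^ 2 + C t) * (convDen t (n + 1) * convDen t n))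
        = (-1) ^ n * (2 * X ^ 3 - C (normLead t n) * C (normLead t (n + 1)) * X) := by
  induction n with
  | zero =>
    simp only [convNum, continuant, one_pow, convDen, ne_eq, OfNat.ofNat_ne_zero,
      not_false_eq_true, zero_pow, mul_zero, sub_zero, pow_zero, normLead, map_zero, zero_mul,
      normConst, Even.zero, ↓reduceIte, map_one, zero_add, mul_one, pow_one, one_mul,
      Nat.not_even_one, neg_mul, neg_add_rev, and_true, true_and]
    ring
  | succ n ih =>
    obtain ⟨hN₀, hN, hM⟩ := ih fun m hm hmn => hne m hm (hmn.trans n.le_succ)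
    have he : normLead t (n + 1) ≠ 0 := hne (n + 1) n.succ_pos le_rfl
    have hc : C (2 / normLead t (n + 1)) * C (normLead t (n + 1)) = 2 := by
      rw [← C_mul, div_mul_cancel₀ _ he, C_ofNat]
    have hnext : C (normLead t (n + 2))
        = -C (normLead t n) - C (normConst t (n + 1)) * C (2 / normLead t (n + 1)) ^ 2 := by
      rw [normLead_add_two, ← C_pow, ← C_mul, ← C_neg, ← C_sub]
      congr 1
      field_simp
      ring
    have hP : convNum t (n + 2) = partialQuot t (n + 1) * convNum t (n + 1) + convNum t n := rfl
    have hQ : convDen t (n + 2) = partialQuot t (n + 1) * convDen t (n + 1) + convDen t n := rfl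
    refine ⟨hN, ?_, ?_⟩
    · rw [hP, hQ, normConst_add_two, pow_succ, pow_succ]
      simp only [partialQuot]
      linear_combination (C (2 / normLead t (n + 1)) * X) ^ 2 * hN
        + C (2 / normLead t (n + 1)) * X * hM + hN₀
        - (-1) ^ n * (C (2 / normLead t (n + 1)) * X ^ 4 + C (normLead t n) * X ^ 2) * hc
        - (-1) ^ n * X ^ 2 * hnext
    · rw [hP, hQ, pow_succ]
      simp only [partialQuot]
      linear_combination 2 * C (2 / normLead t (n + 1)) * X * hN + hM
        + (-1) ^ n * (-2 * X ^ 3 + C (normConst t (n + 1)) * C (2 / normLead t (n + 1)) * X) * hc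
        - (-1) ^ n * X * C (normLead t (n + 1)) * hnext

end Convergents

theorem exists_solution_of_normLead_eq_neg_one {K : Type*} [Field K] [LinearOrder K]
    [IsStrictOrderedRing K] (t : K) {n : ℕ} (hn : Even n)
    (hne : ∀ m, 0 < m → m < n → normLead t m ≠ 0) (he : normLead t n = -1) :
    ∃ p q : K[X], q ≠ 0 ∧ p ^ 2 - (X ^ 6 + X ^ 2 + C t) * q ^ 2 = 1 - X ^ 2 := by
  obtain ⟨m, rfl⟩ : ∃ m, n = m + 1 := by
    refine Nat.exists_eq_add_one.mpr (Nat.pos_of_ne_zero ?_)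
    rintro rfl
    simp [normLead] at he
  have h := (convergent_norms t m fun k hk hkm => hne k hk (Nat.lt_succ_of_le hkm)).2.1
  rw [he, normConst_of_even t hn, hn.neg_one_pow, C_neg, C_1] at h
  have hsol : convNum t (m + 1) ^ 2 - (X ^ 6 + X ^ 2 + C t) * convDen t (m + 1) ^ 2 = 1 - X ^ 2 :=
    h.trans (by ring)
  refine ⟨convNum t (m + 1), convDen t (m + 1), fun hq => ?_, hsol⟩
  have h2 := congrArg (eval 2) hsol
  simp only [hq, ne_eq, OfNat.ofNat_ne_zero, not_false_eq_true, zero_pow, mul_zero, sub_zero,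
    eval_pow, eval_sub, eval_one, eval_X] at h2
  nlinarith [sq_nonneg (eval 2 (convNum t (m + 1)))]

theorem expand_two_solution {R : Type*} [CommRing R] {t : R} {p q : R[X]}
    (h : p ^ 2 - (X ^ 6 + X ^ 2 + C t) * q ^ 2 = 1 - X ^ 2) :
    expand R 2 p ^ 2 - (X ^ 12 + X ^ 4 + C t) * expand R 2 q ^ 2 = 1 - X ^ 4 := by
  simpa [← pow_mul] using congrArg (expand R 2) h

theorem complex_solution_of_real {t : ℝ} {p q : ℝ[X]} (hq : q ≠ 0)
    (h : p ^ 2 - (X ^ 6 + X ^ 2 + C t) * q ^ 2 = 1 - X ^ 2) :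
    ∃ A B : ℂ[X], B ≠ 0 ∧ A ^ 2 - (X ^ 12 + X ^ 4 + C (t : ℂ)) * B ^ 2 = X ^ 4 - 1 := by
  have hℂ := expand_two_solution (by simpa using congrArg (map Complex.ofRealHom) h)
  refine ⟨C Complex.I * expand ℂ 2 (p.map Complex.ofRealHom),
    C Complex.I * expand ℂ 2 (q.map Complex.ofRealHom), ?_, ?_⟩
  · simpa [expand_eq_zero two_pos, Polynomial.map_eq_zero_iff Complex.ofRealHom.injective] using hq
  · have hI : C Complex.I ^ 2 = -1 := by rw [← C_pow, Complex.I_sq, C_neg, C_1]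
    linear_combination C Complex.I ^ 2 * hℂ + (1 - X ^ 4) * hI

theorem continuousOn_normLead {K : Type*} [Field K] [TopologicalSpace K]
    [IsTopologicalDivisionRing K] {S : Set K} (n : ℕ)
    (hne : ∀ t ∈ S, ∀ m, 0 < m → m < n → normLead t m ≠ 0) :
    ContinuousOn (fun t => normLead t n) S := by
  induction n using Nat.strong_induction_on with
  | _ n ih =>
  match n, ih with
  | 0, _ => exact continuousOn_const
  | 1, _ => exact continuousOn_const
  | n + 2, ih =>
    have hconst : ContinuousOn (fun t : K => normConst t (n + 1)) S := by
      by_cases h : Even (n + 1)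
      · simpa [normConst, h] using continuousOn_const
      · simp only [normConst, h, if_false]
        exact continuousOn_id
    refine ((ih n (by omega) fun t ht m hm hmn => hne t ht m hm (by omega)).neg.sub
      ((continuousOn_const.mul hconst).div
        ((ih (n + 1) (by omega) fun t ht m hm hmn => hne t ht m hm (by omega)).pow 2) ?_))
    exact fun t ht => pow_ne_zero 2 (hne t ht (n + 1) n.succ_pos (by omega))

theorem block_increment {t s u σ x' s' : ℝ} (hu : 0 < u) (hσ : 0 < σ) (ha : 0 < 4 - 4 * t * σ)
    (hσdef : σ = s - 4 * t / u ^ 2) (hinv : u ^ 2 * σ ^ 2 - 4 * u + 4 * t * σ = 4)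
    (hx' : x' = u - 4 / σ ^ 2) (hs' : s' = σ + 4 * t / x' ^ 2) :
    0 < x' ∧ s' = s + 32 * t / ((4 - 4 * t * σ) * u) + 64 * t / (4 - 4 * t * σ) ^ 2 := by
  generalize hadef : 4 - 4 * t * σ = a at ha ⊢
  have huσ : u ^ 2 * σ ^ 2 = a + 4 * u := by linear_combination hinv + hadef
  have hx'eq : x' = a / (u * σ ^ 2) := by
    rw [hx']; field_simp; linear_combination huσ
  refine ⟨hx'eq ▸ by positivity, ?_⟩
  rw [hs', hσdef, hx'eq]
  field_simp
  linear_combination (4 * t * (u ^ 2 * σ ^ 2 + a + 4 * u)) * huσ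

/-- `x, −s, −u, σ, x', −s'` stand for six consecutive terms `eₙ, …, eₙ₊₅` of `normLead t`
with `n` odd; `hinv` is `normLead_conservation` at `n + 2`. -/
theorem block_step {t x s u σ x' s' : ℝ} (ht : 0 < t) (ht_le : t ≤ 1 / 20) (hx : 0 < x)
    (hs : 0 < s) (hs_le : s ≤ 3 / 2) (hu : u = x + 4 / s ^ 2) (hσ : σ = s - 4 * t / u ^ 2)
    (hinv : u ^ 2 * σ ^ 2 - 4 * u + 4 * t * σ = 4) (hx' : x' = u - 4 / σ ^ 2)
    (hs' : s' = σ + 4 * t / x' ^ 2) :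
    0 < σ ∧ 0 < x' ∧ s + 4 * t ≤ s' ∧ s' ≤ s + t * (4 + 12 / 5 * s ^ 2 + 10 * t * s) := by
  have hus : 4 < u * s ^ 2 := by rw [hu]; field_simp; nlinarith [mul_pos hx (pow_pos hs 2)]
  have hu0 : 0 < u := pos_of_mul_pos_left (by linarith) (sq_nonneg s)
  have hσ0 : 0 < σ := by
    rw [hσ, sub_pos, div_lt_iff₀ (by positivity)]
    nlinarith [pow_pos hs 3, mul_pos hu0 hs]
  have hσs : σ ≤ s := by rw [hσ]; linarith [div_nonneg (by linarith : 0 ≤ 4 * t) (sq_nonneg u)]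
  have hts : t * s ≤ 3 / 40 := by nlinarith
  have htσ : t * σ ≤ t * s := mul_le_mul_of_nonneg_left hσs ht.le
  obtain ⟨hx'0, hincr⟩ := block_increment hu0 hσ0 (by nlinarith) hσ hinv hx' hs'
  generalize ha : 4 - 4 * t * σ = a at hincr
  have ha0 : 4 - 4 * (t * s) ≤ a := by linarith
  have ha4 : a ≤ 4 := by nlinarith [mul_pos ht hσ0]
  have ha_pos : 0 < a := by linarith
  refine ⟨hσ0, hx'0, ?_, ?_⟩ <;> rw [hincr]
  · have h1 : 0 ≤ 32 * t / (a * u) := by positivity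
    have h2 : 4 * t ≤ 64 * t / a ^ 2 := by
      rw [le_div_iff₀ (by positivity)]
      nlinarith [mul_le_mul_of_nonneg_left (by nlinarith : a ^ 2 ≤ 16) ht.le]
    linarith
  · have h1 : 32 * t / (a * u) ≤ t * (12 / 5 * s ^ 2) := by
      rw [div_le_iff₀ (by positivity)]
      nlinarith [mul_le_mul_of_nonneg_left (by nlinarith : 32 ≤ 12 / 5 * s ^ 2 * (a * u)) ht.le]
    have h2 : 64 * t / a ^ 2 ≤ t * (4 + 10 * t * s) := by
      rw [div_le_iff₀ (by positivity)]
      have hy : 0 ≤ t * s := by positivity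
      have key : 64 ≤ (4 + 10 * (t * s)) * (4 - 4 * (t * s)) ^ 2 := by
        have hq : 0 ≤ 2 - 16 * (t * s) + 10 * (t * s) ^ 2 := by linarith [sq_nonneg (t * s)]
        linear_combination 16 * mul_nonneg hy hq
      have hsq : (4 - 4 * (t * s)) ^ 2 ≤ a ^ 2 := pow_le_pow_left₀ (by linarith) ha0 2
      have : 64 ≤ (4 + 10 * (t * s)) * a ^ 2 := by
        linear_combination key
          + mul_le_mul_of_nonneg_left hsq (by positivity : (0 : ℝ) ≤ 4 + 10 * (t * s))
      linear_combination mul_le_mul_of_nonneg_left this ht.le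
    linarith

/-- The envelope `4z + 32z³` equals `3/2` at `z = 1/4` and `22/27 < 1` at `z = 1/6`. -/
theorem envelope_step {t z s s' : ℝ} (ht : 0 ≤ t) (hz : 0 ≤ z) (hzt : z + t ≤ 1 / 4)
    (hs : 0 ≤ s) (hsz : s ≤ 4 * z + 32 * z ^ 3)
    (hs' : s' ≤ s + t * (4 + 12 / 5 * s ^ 2 + 10 * t * s)) :
    s' ≤ 4 * (z + t) + 32 * (z + t) ^ 3 := by
  have hz2 : z ^ 2 ≤ 1 / 16 := by nlinarith
  have hs6 : s ≤ 6 * z := by nlinarith [mul_le_mul_of_nonneg_left hz2 hz]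
  have hsq : s ^ 2 ≤ 36 * z ^ 2 := by nlinarith
  have h1 : t * s ^ 2 ≤ t * (36 * z ^ 2) := mul_le_mul_of_nonneg_left hsq ht
  have h2 : t * t * s ≤ t * t * (6 * z) := mul_le_mul_of_nonneg_left hs6 (by positivity)
  nlinarith [mul_nonneg (mul_nonneg ht ht) hz, mul_nonneg (mul_nonneg ht hz) hz, pow_nonneg ht 3]

theorem normLead_block_step {t : ℝ} {n : ℕ} (hn : Odd n) (ht : 0 < t) (ht_le : t ≤ 1 / 20)
    (hx : 0 < normLead t n) (hs : 0 < -normLead t (n + 1)) (hs_le : -normLead t (n + 1) ≤ 3 / 2)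
    (hne : ∀ m, 0 < m → m ≤ n + 1 → normLead t m ≠ 0) :
    normLead t (n + 2) < 0 ∧ 0 < normLead t (n + 3) ∧ 0 < normLead t (n + 4) ∧
      -normLead t (n + 1) + 4 * t ≤ -normLead t (n + 5) ∧
      -normLead t (n + 5) ≤ -normLead t (n + 1)
        + t * (4 + 12 / 5 * (-normLead t (n + 1)) ^ 2 + 10 * t * -normLead t (n + 1)) := by
  have hf1 : normConst t (n + 1) = 1 := normConst_of_even t hn.add_one
  have hf2 : normConst t (n + 2) = t := normConst_of_odd t (hn.add_even even_two)
  have hf3 : normConst t (n + 3) = 1 := (normConst_add_two t (n + 1)).trans hf1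
  have hf4 : normConst t (n + 4) = t := (normConst_add_two t (n + 2)).trans hf2
  have hu : -normLead t (n + 2) = normLead t n + 4 / (-normLead t (n + 1)) ^ 2 := by
    rw [normLead_add_two, hf1]; ring
  have hσ : normLead t (n + 3) = -normLead t (n + 1) - 4 * t / (-normLead t (n + 2)) ^ 2 := by
    rw [show n + 3 = n + 1 + 2 from rfl, normLead_add_two, hf2]; ring
  have hx' : normLead t (n + 4) = -normLead t (n + 2) - 4 / normLead t (n + 3) ^ 2 := by
    rw [show n + 4 = n + 2 + 2 from rfl, normLead_add_two, hf3]; ring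
  have hs' : -normLead t (n + 5) = normLead t (n + 3) + 4 * t / normLead t (n + 4) ^ 2 := by
    rw [show n + 5 = n + 3 + 2 from rfl, normLead_add_two, hf4]; ring
  have hu0 : normLead t (n + 2) < 0 := by
    have : 0 < normLead t n + 4 / (-normLead t (n + 1)) ^ 2 := by positivity
    linarith
  have hinv : (-normLead t (n + 2)) ^ 2 * normLead t (n + 3) ^ 2 - 4 * -normLead t (n + 2)
      + 4 * t * normLead t (n + 3) = 4 := by
    have h := normLead_conservation t (n + 2) fun m hm hmn => by
      rcases Nat.lt_or_ge m (n + 2) with h | h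
      · exact hne m hm (by omega)
      · rw [show m = n + 2 by omega]; exact hu0.ne
    rw [hf3, show n + 2 + 1 = n + 3 from rfl, hf2] at h
    linear_combination h
  obtain ⟨hσ0, hx'0, hlo, hhi⟩ := block_step ht ht_le hx hs hs_le hu hσ hinv hx' hs'
  exact ⟨hu0, hσ0, hx'0, hlo, hhi⟩

theorem normLead_bounds {t : ℝ} (ht : 0 < t) (ht_le : t ≤ 1 / 20) (j : ℕ)
    (hj : (j + 1) * t ≤ 1 / 4) :
    0 < normLead t (4 * j + 1) ∧ 4 * ((j + 1) * t) ≤ -normLead t (4 * j + 2) ∧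
      -normLead t (4 * j + 2) ≤ 4 * ((j + 1) * t) + 32 * ((j + 1) * t) ^ 3 ∧
      ∀ m, 0 < m → m ≤ 4 * j + 2 → normLead t m ≠ 0 := by
  induction j with
  | zero =>
    simp only [Nat.cast_zero, zero_add, one_mul, mul_zero]
    have h2 : normLead t 2 = -(4 * t) := by simp [normLead, normConst]
    refine ⟨by simp [normLead], by rw [h2, neg_neg], ?_, fun m hm hm2 => ?_⟩
    · rw [h2, neg_neg]; exact le_add_of_nonneg_right (by positivity)
    interval_cases m
    · simp [normLead]
    · rw [h2]; exact neg_ne_zero.mpr (by positivity)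
  | succ j ih =>
    push_cast at hj ⊢
    obtain ⟨hx, hlo, hhi, hne⟩ := ih (by linarith)
    have hs0 : 0 ≤ -normLead t (4 * j + 2) := (by positivity : (0 : ℝ) ≤ _).trans hlo
    have hz : 4 * ((j + 1) * t) + 32 * ((j + 1) * t) ^ 3 ≤ 3 / 2 := by
      have : (j + 1) * t ≤ 1 / 4 := by linarith
      nlinarith [pow_le_pow_left₀ (by positivity) this 3]
    obtain ⟨h3, h4, h5, hlo', hhi'⟩ := normLead_block_step (n := 4 * j + 1) ⟨2 * j, by ring⟩
      ht ht_le hx (lt_of_lt_of_le (by positivity) hlo) (hhi.trans hz) hne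
    rw [show 4 * j + 1 + 1 = 4 * j + 2 from rfl] at hlo' hhi'
    rw [show 4 * (j + 1) + 1 = 4 * j + 1 + 4 by ring, show 4 * (j + 1) + 2 = 4 * j + 1 + 5 by ring]
    refine ⟨h5, by linarith, ?_, fun m hm hmj => ?_⟩
    · linear_combination envelope_step ht.le (by positivity) (by linarith) hs0 hhi hhi'
    · rcases Nat.lt_or_ge (4 * j + 2) m with hm' | hm'
      · obtain rfl | rfl | rfl | rfl :
            m = 4 * j + 1 + 2 ∨ m = 4 * j + 1 + 3 ∨ m = 4 * j + 1 + 4 ∨ m = 4 * j + 1 + 5 := by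
          omega
        · exact h3.ne
        · exact h4.ne'
        · exact h5.ne'
        · intro h
          rw [h] at hlo'
          linarith
      · exact hne m hm hm'

theorem exists_normLead_eq_neg_one (k : ℕ) (hk : 4 ≤ k) :
    ∃ t : ℝ, 0 < t ∧ t ≤ 1 / (4 * (k + 1)) ∧
      (∀ m, 0 < m → m < 4 * k + 2 → normLead t m ≠ 0) ∧ normLead t (4 * k + 2) = -1 := by
  have hk' : (4 : ℝ) ≤ k := by exact_mod_cast hk
  have hLR : 1 / (6 * ((k : ℝ) + 1)) ≤ 1 / (4 * (k + 1)) := by gcongr; norm_num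
  have hbounds : ∀ t ∈ Set.Icc (1 / (6 * ((k : ℝ) + 1))) (1 / (4 * (k + 1))),
      0 < t ∧ t ≤ 1 / 20 ∧ (k + 1) * t ≤ 1 / 4 := by
    rintro t ⟨hL, hR⟩
    refine ⟨lt_of_lt_of_le (by positivity) hL, hR.trans ?_, ?_⟩
    · rw [div_le_div_iff₀ (by positivity) (by norm_num)]; linarith
    · rw [le_div_iff₀ (by positivity)] at hR; linarith
  have hcont : ContinuousOn (fun t => normLead t (4 * k + 2))
      (Set.Icc (1 / (6 * ((k : ℝ) + 1))) (1 / (4 * (k + 1)))) :=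
    continuousOn_normLead _ fun t ht m hm hmk =>
      have ⟨ht0, ht20, htk⟩ := hbounds t ht
      (normLead_bounds ht0 ht20 k htk).2.2.2 m hm hmk.le
  have hR : normLead (1 / (4 * ((k : ℝ) + 1))) (4 * k + 2) ≤ -1 := by
    have ⟨ht0, ht20, htk⟩ := hbounds _ ⟨hLR, le_rfl⟩
    have h := (normLead_bounds ht0 ht20 k htk).2.1
    rw [show ((k : ℝ) + 1) * (1 / (4 * (k + 1))) = 1 / 4 by field_simp] at h
    linarith
  have hL : -1 ≤ normLead (1 / (6 * ((k : ℝ) + 1))) (4 * k + 2) := by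
    have ⟨ht0, ht20, htk⟩ := hbounds _ ⟨le_rfl, hLR⟩
    have h := (normLead_bounds ht0 ht20 k htk).2.2.1
    rw [show ((k : ℝ) + 1) * (1 / (6 * (k + 1))) = 1 / 6 by field_simp] at h
    linarith
  obtain ⟨t, ht, he⟩ := intermediate_value_Icc' hLR hcont ⟨hR, hL⟩
  have ⟨ht0, ht20, htk⟩ := hbounds t ht
  exact ⟨t, ht0, ht.2, fun m hm hmk => (normLead_bounds ht0 ht20 k htk).2.2.2 m hm hmk.le, he⟩

theorem exists_solvable_mem_Ioc (k : ℕ) (hk : 4 ≤ k) :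
    ∃ t ∈ Set.Ioc (0 : ℝ) (1 / (4 * (k + 1))),
      ∃ A B : ℂ[X], B ≠ 0 ∧ A ^ 2 - (X ^ 12 + X ^ 4 + C (t : ℂ)) * B ^ 2 = X ^ 4 - 1 := by
  obtain ⟨t, ht, htk, hne, he⟩ := exists_normLead_eq_neg_one k hk
  obtain ⟨p, q, hq, h⟩ := exists_solution_of_normLead_eq_neg_one t ⟨2 * k + 1, by ring⟩ hne he
  exact ⟨t, ⟨ht, htk⟩, complex_solution_of_real hq h⟩

end AlmostPell

/-- The set of complex numbers `t₀` for which there exist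
`A, B ∈ ℂ[X]` with `B ≠ 0` satisfying `A² − (X¹² + X⁴ + t₀)·B² = X⁴ − 1` is infinite. -/
theorem infinite_solvable_specializations_degree_twelve :
    {t₀ : ℂ | ∃ A B : Polynomial ℂ, B ≠ 0 ∧
      A ^ 2 - (X ^ 12 + X ^ 4 + C t₀) * B ^ 2 = X ^ 4 - 1}.Infinite := by
  refine (((Set.infinite_of_not_bddAbove ?_).of_image Inv.inv).image
    Complex.ofReal_injective.injOn).mono (Set.image_preimage_subset _ _)
  rintro ⟨b, hb⟩
  obtain ⟨k, hk⟩ := exists_nat_gt b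
  obtain ⟨t, ⟨ht, htk⟩, hsol⟩ := AlmostPell.exists_solvable_mem_Ioc (k + 4) (by omega)
  have hinv : (4 : ℝ) * (k + 4 + 1) ≤ t⁻¹ := by
    rw [le_inv_comm₀ (by positivity) ht]; simpa using htk
  linarith [hb ⟨t, hsol, rfl⟩]
end
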